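/- arXiv:1606.06825 — 6 statements merged into one kernel-verified Lean document; each statement's English description precedes it below -/
import Mathlib

section
/- Let n ≥ 2 be an integer. There is a constant C = C(n) such that for every measurable ρ : ℝⁿ → [0,∞) with ∫_{ℝⁿ} ρ ln(1+ρ) dx < ∞, every x ∈ ℝⁿ and every s ∈ (0,1), the density maximal function satisfies (ln(1/s)) · Mρ(s,x) ≤ ‖ρ ln(1+ρ)‖_{L¹(ℝⁿ)} + C(n); in particular Mρ(s,x) ≤ (‖ρ ln(1+ρ)‖_{L¹(ℝⁿ)} + C(n)) (ln(1/s))^{-1}. -/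
/-!
Split `ρ` at the height `t = 1/s`: pointwise `ρ ≤ t + ρ ln(1+ρ) / ln(1+t)`, since either `ρ ≤ t`
or `ln(1+ρ) ≥ ln(1+t)`. Integrating over `B_s(x)` gives
`Mρ(s,x) ≤ |B_1| s^(n-1) + ‖ρ ln(1+ρ)‖₁ / ln(1+1/s)`, and multiplying by `ln(1/s)` bounds the first
term by `|B_1|` (because `s^(n-1) ln(1/s) ≤ s ln(1/s) ≤ 1` for `n ≥ 2`) and the second by
`‖ρ ln(1+ρ)‖₁`.
-/

open MeasureTheory Metric Set Filter Real

lemma le_add_mul_log_div_log {r t : ℝ} (hr : 0 ≤ r) (ht : 0 < t) :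
    r ≤ t + r * log (1 + r) / log (1 + t) := by
  have hlog_t : 0 < log (1 + t) := log_pos (by linarith)
  rcases le_or_gt r t with hrt | htr
  · have : 0 ≤ r * log (1 + r) / log (1 + t) :=
      div_nonneg (mul_nonneg hr (log_nonneg (by linarith))) hlog_t.le
    linarith
  · have hlog_le : log (1 + t) ≤ log (1 + r) := log_le_log (by linarith) (by linarith)
    have : r ≤ r * log (1 + r) / log (1 + t) := by
      rw [le_div_iff₀ hlog_t]
      exact mul_le_mul_of_nonneg_left hlog_le hr
    linarith

theorem setIntegral_le_mul_measureReal_add_div_log {α : Type*} [MeasurableSpace α]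
    {μ : Measure α} {ρ : α → ℝ} {A : Set α} {t : ℝ} (hρ : ∀ y, 0 ≤ ρ y)
    (hInt : Integrable (fun y => ρ y * log (1 + ρ y)) μ) (hA : μ A ≠ ⊤) (ht : 0 < t) :
    ∫ y in A, ρ y ∂μ ≤ t * μ.real A + (∫ y, ρ y * log (1 + ρ y) ∂μ) / log (1 + t) := by
  have hlog_t : 0 < log (1 + t) := log_pos (by linarith)
  calc ∫ y in A, ρ y ∂μ ≤ ∫ y in A, (t + ρ y * log (1 + ρ y) / log (1 + t)) ∂μ :=
        integral_mono_of_nonneg (ae_of_all _ hρ)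
          ((integrableOn_const hA).add (hInt.div_const _).integrableOn)
          (ae_of_all _ fun y => le_add_mul_log_div_log (hρ y) ht)
    _ = t * μ.real A + (∫ y in A, ρ y * log (1 + ρ y) ∂μ) / log (1 + t) := by
        rw [integral_add (integrableOn_const (C := t) hA) (hInt.div_const _).integrableOn,
          setIntegral_const, integral_div, smul_eq_mul, mul_comm]
    _ ≤ t * μ.real A + (∫ y, ρ y * log (1 + ρ y) ∂μ) / log (1 + t) := by
        refine add_le_add_right (div_le_div_of_nonneg_right (setIntegral_le_integral hInt ?_)
          hlog_t.le) _
        exact ae_of_all _ fun y => mul_nonneg (hρ y) (log_nonneg (by linarith [hρ y]))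

lemma pow_mul_log_one_div_le_one {s : ℝ} (hs0 : 0 < s) (hs1 : s ≤ 1) {m : ℕ} (hm : m ≠ 0) :
    s ^ m * log (1 / s) ≤ 1 := by
  have hlog : 0 ≤ log (1 / s) := log_nonneg (one_le_one_div hs0 hs1)
  calc s ^ m * log (1 / s) ≤ s * log (1 / s) :=
        mul_le_mul_of_nonneg_right (pow_le_of_le_one hs0.le hs1 hm) hlog
    _ = -(log s * s) := by rw [one_div, log_inv]; ring
    _ ≤ 1 := (neg_le_abs _).trans (abs_log_mul_self_lt s hs0 hs1).le

/-- For `n ≥ 2` there is a constant `C = C(n)` such that for every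
nonnegative measurable `ρ` with `ρ ln(1+ρ) ∈ L¹(ℝⁿ)`, every `x` and every `s ∈ (0,1)`,
`(ln(1/s)) Mρ(s,x) ≤ ‖ρ ln(1+ρ)‖_{L¹} + C`; in particular
`Mρ(s,x) ≤ (‖ρ ln(1+ρ)‖_{L¹} + C) (ln(1/s))⁻¹`. -/
theorem stmt1 (n : ℕ) (hn : 2 ≤ n) :
    ∃ C : ℝ, 0 < C ∧
      ∀ ρ : EuclideanSpace ℝ (Fin n) → ℝ, Measurable ρ → (∀ y, 0 ≤ ρ y) →
        Integrable (fun y => ρ y * Real.log (1 + ρ y)) →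
        ∀ (x : EuclideanSpace ℝ (Fin n)) (s : ℝ), s ∈ Set.Ioo (0 : ℝ) 1 →
          Real.log (1 / s) * ∫ y in closedBall x s, ρ y ≤
              (∫ y, ρ y * Real.log (1 + ρ y)) + C ∧
          ∫ y in closedBall x s, ρ y ≤
              ((∫ y, ρ y * Real.log (1 + ρ y)) + C) * (Real.log (1 / s))⁻¹ := by
  set ω := (volume : Measure (EuclideanSpace ℝ (Fin n))).real (ball 0 1)
  refine ⟨ω + 1, add_pos_of_nonneg_of_pos measureReal_nonneg one_pos,
    fun ρ _ hρ hInt x s ⟨hs0, hs1⟩ => ?_⟩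
  set L := ∫ y, ρ y * log (1 + ρ y)
  have hL : 0 ≤ L := integral_nonneg fun y => mul_nonneg (hρ y) (log_nonneg (by linarith [hρ y]))
  have hlog : 0 < log (1 / s) := log_pos (one_lt_one_div hs0 hs1)
  have hmass := setIntegral_le_mul_measureReal_add_div_log (A := closedBall x s) hρ hInt
    measure_closedBall_lt_top.ne (one_div_pos.2 hs0)
  have hvolume_term : log (1 / s) * (1 / s * volume.real (closedBall x s)) ≤ ω := by
    have hpow : s ^ n = s * s ^ (n - 1) := by rw [← pow_succ']; congr 1; omega
    rw [Measure.addHaar_real_closedBall volume x hs0.le, finrank_euclideanSpace_fin, hpow]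
    calc log (1 / s) * (1 / s * (s * s ^ (n - 1) * ω)) = ω * (s ^ (n - 1) * log (1 / s)) := by
          field_simp
      _ ≤ ω * 1 := mul_le_mul_of_nonneg_left
          (pow_mul_log_one_div_le_one hs0 hs1.le (by omega)) measureReal_nonneg
      _ = ω := mul_one ω
  have hentropy_term : log (1 / s) * (L / log (1 + 1 / s)) ≤ L := by
    rw [mul_div_left_comm]
    refine mul_le_of_le_one_right hL (div_le_one_of_le₀ ?_ (log_pos (by simp [hs0])).le)
    exact log_le_log (by positivity) (by linarith)
  have key : log (1 / s) * ∫ y in closedBall x s, ρ y ≤ L + (ω + 1) := by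
    calc log (1 / s) * ∫ y in closedBall x s, ρ y
        ≤ log (1 / s) * (1 / s * volume.real (closedBall x s) + L / log (1 + 1 / s)) :=
          mul_le_mul_of_nonneg_left hmass hlog.le
      _ ≤ ω + L := by rw [mul_add]; exact add_le_add hvolume_term hentropy_term
      _ ≤ L + (ω + 1) := by linarith
  exact ⟨key, (le_mul_inv_iff₀ hlog).2 (by linarith)⟩
end

section
/- Let ρ : ℝ² → [0,∞) be measurable, x ∈ ℝ², β > 1 and s ∈ (0,1). Suppose the density maximal function satisfies Mρ(σ,x) ≤ (ln(1/σ))^{-β} for every σ ∈ (0,s]. Then ∫_{B_s(x)} ln(1/|x-y|) ρ(y) dy ≤ (1 + 1/(β-1)) (ln(1/s))^{1-β}. -/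
/-!
By the layer-cake formula,
`∫_{B_s(x)} ln(1/|x-y|) ρ(y) dy = ∫₀^∞ ρ{y ∈ B_s(x) : ln(1/|x-y|) > t} dt`,
and that set lies in `B_{min(e^{-t}, s)}(x)`. With `L = ln(1/s)` the hypothesis therefore bounds
the integrand by `max(L, t)^{-β}`, and `∫₀^∞ max(L, t)^{-β} dt = L^{1-β} + L^{1-β}/(β-1)`.
-/

open MeasureTheory Metric Set Filter

lemma Real.log_one_div_nonneg {r : ℝ} (h0 : 0 ≤ r) (h1 : r ≤ 1) : 0 ≤ Real.log (1 / r) := by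
  rw [one_div, Real.log_inv]
  exact neg_nonneg.2 (Real.log_nonpos h0 h1)

lemma Real.log_one_div_exp_neg (t : ℝ) : Real.log (1 / Real.exp (-t)) = t := by
  rw [one_div, Real.log_inv, Real.log_exp, neg_neg]

section MaxRpow

variable {L β : ℝ}

lemma integrableOn_Ioc_max_rpow (L β : ℝ) :
    IntegrableOn (fun t : ℝ => max L t ^ (-β)) (Ioc 0 L) :=
  (integrableOn_const (C := L ^ (-β)) measure_Ioc_lt_top.ne).congr_fun
    (fun t ht => by simp only [max_eq_left ht.2]) measurableSet_Ioc

lemma integrableOn_Ioi_max_rpow_neg (hL : 0 < L) (hβ : 1 < β) :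
    IntegrableOn (fun t : ℝ => max L t ^ (-β)) (Ioi L) :=
  (integrableOn_Ioi_rpow_of_lt (a := -β) (by linarith) hL).congr_fun
    (fun t ht => by simp only [max_eq_right (le_of_lt (mem_Ioi.1 ht))]) measurableSet_Ioi

lemma integral_Ioi_max_rpow_neg (hL : 0 < L) (hβ : 1 < β) :
    ∫ t in Ioi 0, max L t ^ (-β) = (1 + 1 / (β - 1)) * L ^ (1 - β) := by
  rw [← Ioc_union_Ioi_eq_Ioi hL.le, setIntegral_union (Ioc_disjoint_Ioi le_rfl) measurableSet_Ioi
    (integrableOn_Ioc_max_rpow L β) (integrableOn_Ioi_max_rpow_neg hL hβ)]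
  have h_Ioc : ∫ t in Ioc 0 L, max L t ^ (-β) = L * L ^ (-β) := by
    rw [setIntegral_congr_fun measurableSet_Ioc (g := fun _ => L ^ (-β))
      (fun t ht => by simp only [max_eq_left ht.2])]
    simp [hL.le]
  have h_Ioi : ∫ t in Ioi L, max L t ^ (-β) = L ^ (1 - β) / (β - 1) := by
    rw [setIntegral_congr_fun measurableSet_Ioi (g := fun t => t ^ (-β))
      (fun t ht => by simp only [max_eq_right (le_of_lt (mem_Ioi.1 ht))]),
      integral_Ioi_rpow_of_lt (by linarith) hL, neg_add_eq_sub, ← neg_sub β 1, neg_div_neg_eq]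
  have h_pow : L * L ^ (-β) = L ^ (1 - β) := by
    rw [sub_eq_add_neg, Real.rpow_add hL, Real.rpow_one]
  rw [h_Ioc, h_Ioi, h_pow]
  ring

lemma lintegral_Ioi_max_rpow_neg (hL : 0 < L) (hβ : 1 < β) :
    ∫⁻ t in Ioi 0, ENNReal.ofReal (max L t ^ (-β)) =
      ENNReal.ofReal ((1 + 1 / (β - 1)) * L ^ (1 - β)) := by
  have h_int : IntegrableOn (fun t : ℝ => max L t ^ (-β)) (Ioi 0) := by
    rw [← Ioc_union_Ioi_eq_Ioi hL.le]
    exact (integrableOn_Ioc_max_rpow L β).union (integrableOn_Ioi_max_rpow_neg hL hβ)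
  rw [← integral_Ioi_max_rpow_neg hL hβ, ofReal_integral_eq_lintegral_ofReal h_int
    (ae_of_all _ fun t => Real.rpow_nonneg (hL.le.trans (le_max_left L t)) _)]

end MaxRpow

section LogKernel

variable {X : Type*} [PseudoMetricSpace X]

lemma log_one_div_dist_nonneg_of_mem_closedBall {x y : X} {s : ℝ} (hs : s ≤ 1)
    (hy : y ∈ closedBall x s) : 0 ≤ Real.log (1 / dist x y) :=
  Real.log_one_div_nonneg dist_nonneg ((mem_closedBall'.1 hy).trans hs)

lemma setOf_lt_log_one_div_dist_subset (x : X) {t : ℝ} (ht : 0 ≤ t) :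
    {y | t < Real.log (1 / dist x y)} ⊆ closedBall x (Real.exp (-t)) := by
  intro y hy
  have hd : 0 < dist x y := by
    refine dist_nonneg.lt_of_ne fun h => ?_
    simp [← h] at hy
    linarith
  have h_exp : Real.exp t < 1 / dist x y := (Real.lt_log_iff_exp_lt (by positivity)).1 hy
  rw [mem_closedBall, dist_comm, Real.exp_neg]
  exact ((lt_inv_comm₀ (Real.exp_pos t) hd).1 (by rwa [one_div] at h_exp)).le

variable [MeasurableSpace X] {ν : Measure X} {x : X} {s β : ℝ}

lemma measure_setOf_lt_log_one_div_dist_inter_closedBall_le (hs : s ∈ Ioo 0 1)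
    (hdecay : ∀ σ : ℝ, 0 < σ → σ ≤ s →
      ν (closedBall x σ) ≤ ENNReal.ofReal (Real.log (1 / σ) ^ (-β)))
    {t : ℝ} (ht : 0 < t) :
    ν ({y | t < Real.log (1 / dist x y)} ∩ closedBall x s) ≤
      ENNReal.ofReal (max (Real.log (1 / s)) t ^ (-β)) := by
  rcases le_total t (Real.log (1 / s)) with htL | hLt
  · rw [max_eq_left htL]
    exact (measure_mono inter_subset_right).trans (hdecay s hs.1 le_rfl)
  · have h_exp : Real.exp (-t) ≤ s := by
      rw [← Real.log_one_div_exp_neg t] at hLt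
      have := (Real.log_le_log_iff (one_div_pos.2 hs.1) (by positivity)).1 hLt
      exact (one_div_le_one_div hs.1 (Real.exp_pos _)).1 this
    rw [max_eq_right hLt]
    calc ν ({y | t < Real.log (1 / dist x y)} ∩ closedBall x s)
        ≤ ν (closedBall x (Real.exp (-t))) :=
          measure_mono (inter_subset_left.trans (setOf_lt_log_one_div_dist_subset x ht.le))
      _ ≤ ENNReal.ofReal (t ^ (-β)) := by
          simpa only [Real.log_one_div_exp_neg] using hdecay _ (Real.exp_pos _) h_exp

lemma setLIntegral_log_one_div_dist_le [OpensMeasurableSpace X] (hβ : 1 < β)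
    (hs : s ∈ Ioo 0 1)
    (hdecay : ∀ σ : ℝ, 0 < σ → σ ≤ s →
      ν (closedBall x σ) ≤ ENNReal.ofReal (Real.log (1 / σ) ^ (-β))) :
    ∫⁻ y in closedBall x s, ENNReal.ofReal (Real.log (1 / dist x y)) ∂ν ≤
      ENNReal.ofReal ((1 + 1 / (β - 1)) * Real.log (1 / s) ^ (1 - β)) := by
  have h_nonneg : 0 ≤ᵐ[ν.restrict (closedBall x s)] fun y => Real.log (1 / dist x y) := by
    filter_upwards [ae_restrict_mem measurableSet_closedBall] with y hy
    exact log_one_div_dist_nonneg_of_mem_closedBall hs.2.le hy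
  rw [lintegral_eq_lintegral_meas_lt _ h_nonneg (by fun_prop),
    ← lintegral_Ioi_max_rpow_neg (Real.log_pos (one_lt_one_div hs.1 hs.2)) hβ]
  refine setLIntegral_mono (by fun_prop) fun t ht => ?_
  rw [Measure.restrict_apply' measurableSet_closedBall]
  exact measure_setOf_lt_log_one_div_dist_inter_closedBall_le hs hdecay ht

end LogKernel

lemma integrableOn_of_integrableOn_log_one_div_dist_mul {X : Type*} [MetricSpace X]
    [MeasurableSpace X] [OpensMeasurableSpace X] {μ : Measure X} [NullSingletonClass μ]
    {ρ : X → ℝ} {x : X} {s : ℝ}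
    (hs : s ∈ Ioo 0 1) (hmeas : AEStronglyMeasurable ρ (μ.restrict (closedBall x s)))
    (hρ : ∀ y, 0 ≤ ρ y)
    (h : IntegrableOn (fun y => Real.log (1 / dist x y) * ρ y) (closedBall x s) μ) :
    IntegrableOn ρ (closedBall x s) μ := by
  set L := Real.log (1 / s)
  have hL : 0 < L := Real.log_pos (one_lt_one_div hs.1 hs.2)
  refine (h.const_mul L⁻¹).mono' hmeas ?_
  filter_upwards [ae_restrict_mem measurableSet_closedBall, ae_restrict_of_ae (μ.ae_ne x)]
    with y hy hyx
  have hd : 0 < dist x y := dist_pos.2 hyx.symm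
  have hLy : L ≤ Real.log (1 / dist x y) :=
    Real.log_le_log (one_div_pos.2 hs.1) (one_div_le_one_div_of_le hd (mem_closedBall'.1 hy))
  rw [Real.norm_eq_abs, abs_of_nonneg (hρ y), le_inv_mul_iff₀ hL]
  exact mul_le_mul_of_nonneg_right hLy (hρ y)

/-- In `ℝ²`, if the density maximal function satisfies
`Mρ(σ,x) ≤ (ln(1/σ))^{-β}` for all `σ ∈ (0,s]` with `β > 1` and `s ∈ (0,1)`, then
`∫_{B_s(x)} ln(1/|x-y|) ρ(y) dy ≤ (1 + 1/(β-1)) (ln(1/s))^{1-β}`. -/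
theorem stmt2 (ρ : EuclideanSpace ℝ (Fin 2) → ℝ) (hmeas : Measurable ρ)
    (hρ : ∀ y, 0 ≤ ρ y) (x : EuclideanSpace ℝ (Fin 2)) (β s : ℝ)
    (hβ : 1 < β) (hs : s ∈ Set.Ioo (0 : ℝ) 1)
    (hdecay : ∀ σ : ℝ, 0 < σ → σ ≤ s →
      ∫ y in closedBall x σ, ρ y ≤ Real.log (1 / σ) ^ (-β)) :
    ∫ y in closedBall x s, Real.log (1 / dist x y) * ρ y ≤
      (1 + 1 / (β - 1)) * Real.log (1 / s) ^ (1 - β) := by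
  have h_rhs : 0 ≤ (1 + 1 / (β - 1)) * Real.log (1 / s) ^ (1 - β) :=
    mul_nonneg (by have := sub_pos.2 hβ; positivity)
      (Real.rpow_nonneg (Real.log_one_div_nonneg hs.1.le hs.2.le) _)
  have h_log : ∀ y ∈ closedBall x s, 0 ≤ Real.log (1 / dist x y) := fun _ =>
    log_one_div_dist_nonneg_of_mem_closedBall hs.2.le
  by_cases h_int : IntegrableOn (fun y => Real.log (1 / dist x y) * ρ y) (closedBall x s)
  swap
  · rwa [integral_undef h_int]
  -- `hdecay` is vacuous on balls where `ρ` is not integrable (the integral is then `0`).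
  have hρ_int := integrableOn_of_integrableOn_log_one_div_dist_mul hs
    hmeas.aestronglyMeasurable hρ h_int
  have h_ball : ∀ σ : ℝ, 0 < σ → σ ≤ s →
      volume.withDensity (fun y => ENNReal.ofReal (ρ y)) (closedBall x σ) ≤
        ENNReal.ofReal (Real.log (1 / σ) ^ (-β)) := by
    intro σ hσ hσs
    rw [withDensity_apply _ measurableSet_closedBall, ← ofReal_integral_eq_lintegral_ofReal
      (hρ_int.mono_set (closedBall_subset_closedBall hσs)) (ae_of_all _ hρ)]
    exact ENNReal.ofReal_le_ofReal (hdecay σ hσ hσs)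
  have h_lint := setLIntegral_log_one_div_dist_le hβ hs h_ball
  rw [setLIntegral_withDensity_eq_setLIntegral_mul _ (by fun_prop) (by fun_prop)
    measurableSet_closedBall] at h_lint
  rw [integral_eq_lintegral_of_nonneg_ae _ (by fun_prop)]
  · refine ENNReal.toReal_le_of_le_ofReal h_rhs (le_of_eq_of_le ?_ h_lint)
    refine setLIntegral_congr_fun measurableSet_closedBall fun y hy => ?_
    rw [Pi.mul_apply, ENNReal.ofReal_mul (h_log y hy), mul_comm]
  · filter_upwards [ae_restrict_mem measurableSet_closedBall] with y hy
    exact mul_nonneg (h_log y hy) (hρ y)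
end

section
/- Let ρ : ℝ³ → [0,∞) be measurable, x ∈ ℝ³, β > 1 and s > 0. Suppose the density maximal function satisfies Mρ(σ,x) ≤ σ^β for every σ ∈ (0,s]. Then ∫_{B_s(x)} |x-y|^{-1} ρ(y) dy ≤ (1 + 1/(β-1)) s^{β-1}. -/
/-!
By the layer-cake formula for the measure `ν = ρ dy` restricted to `B_s(x)`,
`∫_{B_s(x)} |x-y|⁻¹ dν = ∫_0^∞ ν(B_s(x) ∩ {|x-y| < 1/t}) dt ≤ ∫_0^∞ min(1/t, s)^β dt`.
The integrand is the constant `s^β` for `t ≤ 1/s`, contributing `s^(β-1)`, and `t^(-β)` beyond,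
contributing `s^(β-1)/(β-1)`.
-/

open MeasureTheory Metric Set Filter

theorem lintegral_Ioi_min_inv_rpow {β s : ℝ} (hβ : 1 < β) (hs : 0 < s) :
    ∫⁻ t in Ioi 0, ENNReal.ofReal (min t⁻¹ s ^ β) =
      ENNReal.ofReal ((1 + 1 / (β - 1)) * s ^ (β - 1)) := by
  have hs' : 0 < s⁻¹ := inv_pos.mpr hs
  have hnear : ∫⁻ t in Ioc 0 s⁻¹, ENNReal.ofReal (min t⁻¹ s ^ β) =
      ENNReal.ofReal (s ^ (β - 1)) := by
    rw [setLIntegral_congr_fun measurableSet_Ioc fun t ⟨ht0, hts⟩ => by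
        rw [min_eq_right ((le_inv_comm₀ ht0 hs).mp hts)],
      setLIntegral_const, Real.volume_Ioc, sub_zero,
      ← ENNReal.ofReal_mul (by positivity), Real.rpow_sub_one hs.ne', div_eq_mul_inv]
  have hfar : ∫⁻ t in Ioi s⁻¹, ENNReal.ofReal (min t⁻¹ s ^ β) =
      ENNReal.ofReal (s ^ (β - 1) / (β - 1)) := by
    have hβ' : -β < -1 := by linarith
    rw [setLIntegral_congr_fun measurableSet_Ioi fun t (ht : s⁻¹ < t) => by
        rw [min_eq_left ((inv_lt_comm₀ hs (hs'.trans ht)).mp ht).le,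
          Real.inv_rpow (hs'.trans ht).le, ← Real.rpow_neg (hs'.trans ht).le],
      ← ofReal_integral_eq_lintegral_ofReal (integrableOn_Ioi_rpow_of_lt hβ' hs'),
      integral_Ioi_rpow_of_lt hβ' hs', Real.inv_rpow hs.le, ← Real.rpow_neg hs.le]
    · congr 1
      rw [show -(-β + 1) = β - 1 by ring, show -β + 1 = -(β - 1) by ring, div_neg, neg_div,
        neg_neg]
    · filter_upwards [ae_restrict_mem measurableSet_Ioi] with t ht
      exact Real.rpow_nonneg (hs'.trans ht).le _
  rw [← Ioc_union_Ioi_eq_Ioi hs'.le, lintegral_union measurableSet_Ioi Ioc_disjoint_Ioi_same,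
    hnear, hfar, ← ENNReal.ofReal_add (by positivity) (div_nonneg (by positivity) (by linarith))]
  congr 1
  ring

section

variable {X : Type*} [PseudoMetricSpace X] [MeasurableSpace X] [OpensMeasurableSpace X]

theorem measure_restrict_closedBall_inv_dist_gt_le (ν : Measure X) (x : X) {s t : ℝ}
    (ht : 0 < t) :
    ν.restrict (closedBall x s) {y | t < (dist x y)⁻¹} ≤ ν (closedBall x (min t⁻¹ s)) := by
  rw [Measure.restrict_apply' measurableSet_closedBall]
  refine measure_mono fun y ⟨(hyt : t < (dist x y)⁻¹), hys⟩ => ?_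
  have hdist : 0 < dist x y := by
    by_contra! h
    rw [le_antisymm h dist_nonneg, inv_zero] at hyt
    linarith
  rw [mem_closedBall, dist_comm] at hys ⊢
  exact le_min ((lt_inv_comm₀ ht hdist).mp hyt).le hys

theorem setLIntegral_closedBall_inv_dist_le (ν : Measure X) (x : X) {β s : ℝ} (hβ : 1 < β)
    (hs : 0 < s)
    (hν : ∀ σ, 0 < σ → σ ≤ s → ν (closedBall x σ) ≤ ENNReal.ofReal (σ ^ β)) :
    ∫⁻ y in closedBall x s, ENNReal.ofReal (dist x y)⁻¹ ∂ν ≤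
      ENNReal.ofReal ((1 + 1 / (β - 1)) * s ^ (β - 1)) := by
  rw [lintegral_eq_lintegral_meas_lt _ (ae_of_all _ fun y => inv_nonneg.mpr dist_nonneg)
    (by fun_prop), ← lintegral_Ioi_min_inv_rpow hβ hs]
  refine setLIntegral_mono' measurableSet_Ioi fun t (ht : 0 < t) => ?_
  exact (measure_restrict_closedBall_inv_dist_gt_le ν x ht).trans
    (hν _ (lt_min (inv_pos.mpr ht) hs) (min_le_right _ _))

end

theorem MeasureTheory.IntegrableOn.of_inv_dist_mul {X : Type*} [MetricSpace X]
    [MeasurableSpace X] [OpensMeasurableSpace X] {μ : Measure X} [NullSingletonClass μ]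
    {ρ : X → ℝ} {x : X} {s : ℝ} (hρ : AEStronglyMeasurable ρ (μ.restrict (closedBall x s)))
    (h : IntegrableOn (fun y => (dist x y)⁻¹ * ρ y) (closedBall x s) μ) :
    IntegrableOn ρ (closedBall x s) μ := by
  refine (h.norm.const_mul s).mono' hρ ?_
  have hne : ∀ᵐ y ∂μ, y ≠ x := compl_mem_ae_iff.mpr (measure_singleton x)
  filter_upwards [ae_restrict_of_ae hne, ae_restrict_mem measurableSet_closedBall]
    with y hyx (hys : dist y x ≤ s)
  have hdist : 0 < dist x y := dist_pos.mpr hyx.symm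
  rw [norm_mul, norm_inv, Real.norm_of_nonneg hdist.le, ← mul_assoc]
  refine le_mul_of_one_le_left (norm_nonneg _) ?_
  rw [← div_eq_mul_inv, one_le_div hdist, dist_comm]
  exact hys

/-- In `ℝ³`, if the density maximal function satisfies `Mρ(σ,x) ≤ σ^β`
for all `σ ∈ (0,s]` with `β > 1` and `s > 0`, then
`∫_{B_s(x)} |x-y|⁻¹ ρ(y) dy ≤ (1 + 1/(β-1)) s^{β-1}`. -/
theorem stmt3 (ρ : EuclideanSpace ℝ (Fin 3) → ℝ) (hmeas : Measurable ρ)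
    (hρ : ∀ y, 0 ≤ ρ y) (x : EuclideanSpace ℝ (Fin 3)) (β s : ℝ)
    (hβ : 1 < β) (hs : 0 < s)
    (hdecay : ∀ σ : ℝ, 0 < σ → σ ≤ s → ∫ y in closedBall x σ, ρ y ≤ σ ^ β) :
    ∫ y in closedBall x s, (dist x y)⁻¹ * ρ y ≤ (1 + 1 / (β - 1)) * s ^ (β - 1) := by
  have hβ1 : 0 < β - 1 := by linarith
  by_cases hintegrable : IntegrableOn (fun y => (dist x y)⁻¹ * ρ y) (closedBall x s)
  swap
  · rw [integral_undef hintegrable]; positivity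
  -- `hdecay` is void unless `ρ` is integrable on the balls (the Bochner integral is `0` otherwise);
  -- integrability follows from `|x-y|⁻¹ ≥ s⁻¹` on `B_s(x)`.
  have hρint := hintegrable.of_inv_dist_mul hmeas.aestronglyMeasurable
  set ν := volume.withDensity fun y => ENNReal.ofReal (ρ y)
  have hν : ∀ σ, 0 < σ → σ ≤ s → ν (closedBall x σ) ≤ ENNReal.ofReal (σ ^ β) := by
    intro σ hσ hσs
    rw [withDensity_apply _ measurableSet_closedBall, ← ofReal_integral_eq_lintegral_ofReal
      (hρint.mono_set (closedBall_subset_closedBall hσs)) (ae_of_all _ hρ)]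
    exact ENNReal.ofReal_le_ofReal (hdecay σ hσ hσs)
  have hlintegral : ∫⁻ y in closedBall x s, ENNReal.ofReal ((dist x y)⁻¹ * ρ y) =
      ∫⁻ y in closedBall x s, ENNReal.ofReal (dist x y)⁻¹ ∂ν := by
    rw [setLIntegral_withDensity_eq_setLIntegral_mul _ (by fun_prop) (by fun_prop)
      measurableSet_closedBall]
    exact lintegral_congr fun y => by
      rw [ENNReal.ofReal_mul (inv_nonneg.mpr dist_nonneg), Pi.mul_apply, mul_comm]
  rw [integral_eq_lintegral_of_nonneg_ae
    (ae_of_all _ fun y => mul_nonneg (inv_nonneg.mpr dist_nonneg) (hρ y)) (by fun_prop),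
    hlintegral]
  exact ENNReal.toReal_le_of_le_ofReal (by positivity)
    (setLIntegral_closedBall_inv_dist_le ν x hβ hs hν)
end

section
/- Let n ≥ 1 be an integer, ρ : ℝⁿ → [0,∞) measurable, x ∈ ℝⁿ, κ > 0, σ ∈ (-κ, 0) and s > 0. Suppose the density maximal function satisfies Mρ(r,x) ≤ r^κ for every r ∈ (0,s]. Then ∫_{B_s(x)} |x-y|^{σ} ρ(y) dy ≤ (1 + |σ|/(κ+σ)) s^{κ+σ}. -/
/-! By the layer-cake formula, `∫_{B_s(x)} |x-y|^σ dν = ∫₀^∞ ν{y ∈ B_s(x) | t < |x-y|^σ} dt` for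
`ν = ρ dy`. For `t ≤ s^σ` the level set has measure at most `ν(B_s(x)) ≤ s^κ`, contributing
`s^{κ+σ}`. For `t > s^σ` it lies in the ball of radius `t^{1/σ} < s`, of measure at most
`t^{κ/σ}`; since `κ/σ < -1` this is integrable at infinity, with integral `|σ|/(κ+σ) s^{κ+σ}`. -/

open MeasureTheory Metric Set Filter

lemma setOf_lt_dist_rpow_subset_ball {X : Type*} [PseudoMetricSpace X] (x : X) {σ t : ℝ}
    (hσ : σ < 0) (ht : 0 < t) : {y | t < dist x y ^ σ} ⊆ ball x (t ^ σ⁻¹) := by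
  intro y hy
  have hdist : 0 < dist x y := by
    refine dist_nonneg.lt_of_ne fun h => ?_
    rw [mem_ofPred_eq, ← h, Real.zero_rpow hσ.ne] at hy
    exact ht.not_gt hy
  exact mem_ball'.mpr ((Real.lt_rpow_inv_iff_of_neg hdist ht hσ).mpr hy)

lemma integral_Ioi_rpow_rpow_div {κ σ s : ℝ} (hσ : σ < 0) (hκσ : 0 < κ + σ) (hs : 0 < s) :
    ∫ t in Ioi (s ^ σ), t ^ (κ / σ) = -σ / (κ + σ) * s ^ (κ + σ) := by
  have hexp : κ / σ + 1 = (κ + σ) / σ := by rw [add_div, div_self hσ.ne]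
  rw [integral_Ioi_rpow_of_lt (by rw [div_lt_iff_of_neg hσ]; linarith)
      (Real.rpow_pos_of_pos hs σ), ← Real.rpow_mul hs.le, hexp, mul_div_cancel₀ _ hσ.ne]
  field_simp

section

variable {X : Type*} [PseudoMetricSpace X] [MeasurableSpace X]
  {ν : Measure X} {x : X} {κ σ s : ℝ}

lemma measure_setOf_lt_dist_rpow_le (hσ : σ < 0) (hs : 0 < s)
    (hν : ∀ r, 0 < r → r ≤ s → ν (closedBall x r) ≤ ENNReal.ofReal (r ^ κ)) {t : ℝ}
    (ht : s ^ σ < t) : ν {y | t < dist x y ^ σ} ≤ ENNReal.ofReal (t ^ (κ / σ)) := by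
  have ht0 : 0 < t := (Real.rpow_pos_of_pos hs σ).trans ht
  have hpow : t ^ (κ / σ) = (t ^ σ⁻¹) ^ κ := by rw [← Real.rpow_mul ht0.le, inv_mul_eq_div]
  calc ν {y | t < dist x y ^ σ}
      ≤ ν (closedBall x (t ^ σ⁻¹)) :=
        measure_mono ((setOf_lt_dist_rpow_subset_ball x hσ ht0).trans ball_subset_closedBall)
    _ ≤ ENNReal.ofReal (t ^ (κ / σ)) := hpow ▸ hν _ (Real.rpow_pos_of_pos ht0 _)
        ((Real.rpow_inv_lt_iff_of_neg ht0 hs hσ).mpr ht).le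

lemma setLIntegral_closedBall_dist_rpow_le [OpensMeasurableSpace X] (hσ : σ < 0)
    (hκσ : 0 < κ + σ) (hs : 0 < s)
    (hν : ∀ r, 0 < r → r ≤ s → ν (closedBall x r) ≤ ENNReal.ofReal (r ^ κ)) :
    ∫⁻ y in closedBall x s, ENNReal.ofReal (dist x y ^ σ) ∂ν ≤
      ENNReal.ofReal ((1 + |σ| / (κ + σ)) * s ^ (κ + σ)) := by
  have hsσ : 0 < s ^ σ := Real.rpow_pos_of_pos hs σ
  rw [lintegral_eq_lintegral_meas_lt _ (ae_of_all _ fun y => Real.rpow_nonneg dist_nonneg σ)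
      (by fun_prop),
    ← Ioc_union_Ioi_eq_Ioi hsσ.le, lintegral_union measurableSet_Ioi (Ioc_disjoint_Ioi le_rfl)]
  calc (∫⁻ t in Ioc 0 (s ^ σ), ν.restrict (closedBall x s) {y | t < dist x y ^ σ})
        + ∫⁻ t in Ioi (s ^ σ), ν.restrict (closedBall x s) {y | t < dist x y ^ σ}
      ≤ (∫⁻ _ in Ioc 0 (s ^ σ), ENNReal.ofReal (s ^ κ))
        + ∫⁻ t in Ioi (s ^ σ), ENNReal.ofReal (t ^ (κ / σ)) := by
        refine add_le_add (lintegral_mono fun t => ?_)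
          (setLIntegral_mono' measurableSet_Ioi fun t ht => ?_)
        · exact (measure_mono (subset_univ _)).trans
            ((Measure.restrict_apply_univ _).trans_le (hν s hs le_rfl))
        · exact (Measure.restrict_apply_le _ _).trans (measure_setOf_lt_dist_rpow_le hσ hs hν ht)
    _ = ENNReal.ofReal (s ^ (κ + σ)) + ENNReal.ofReal (-σ / (κ + σ) * s ^ (κ + σ)) := by
        rw [setLIntegral_const, Real.volume_Ioc, sub_zero, ← ENNReal.ofReal_mul (by positivity),
          ← Real.rpow_add hs, ← integral_Ioi_rpow_rpow_div hσ hκσ hs,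
          ofReal_integral_eq_lintegral_ofReal (integrableOn_Ioi_rpow_of_lt
            (by rw [div_lt_iff_of_neg hσ]; linarith) hsσ)]
        exact (ae_restrict_mem measurableSet_Ioi).mono fun t ht =>
          Real.rpow_nonneg (hsσ.trans ht).le _
    _ = ENNReal.ofReal ((1 + |σ| / (κ + σ)) * s ^ (κ + σ)) := by
        rw [← ENNReal.ofReal_add (by positivity)
          (mul_nonneg (div_nonneg (by linarith) hκσ.le) (by positivity)), abs_of_neg hσ]
        ring_nf

end

lemma IntegrableOn.of_dist_rpow_mul {X : Type*} [MetricSpace X] [MeasurableSpace X]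
    [OpensMeasurableSpace X] {μ : Measure X} [SigmaFinite μ] {ρ : X → ℝ} {x : X} {σ s : ℝ}
    (hρm : AEStronglyMeasurable ρ μ) (hρ : ∀ y, 0 ≤ ρ y) (hσ : σ ≤ 0)
    (h : IntegrableOn (fun y => dist x y ^ σ * ρ y) (closedBall x s) μ) :
    IntegrableOn ρ (closedBall x s) μ := by
  refine IntegrableOn.mono_set (IntegrableOn.union ?_ ?_) (subset_sdiff_union _ {x})
  · refine ((h.mono_set sdiff_subset).const_mul (s ^ (-σ))).mono' hρm.restrict
      ((ae_restrict_mem (measurableSet_closedBall.diff (measurableSet_singleton x))).mono ?_)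
    rintro y ⟨hys, hyx⟩
    have hdist : 0 < dist x y := dist_pos.mpr (Ne.symm hyx)
    rw [Real.norm_of_nonneg (hρ y)]
    calc ρ y = dist x y ^ (-σ) * (dist x y ^ σ * ρ y) := by
          rw [← mul_assoc, ← Real.rpow_add hdist, neg_add_cancel, Real.rpow_zero, one_mul]
      _ ≤ s ^ (-σ) * (dist x y ^ σ * ρ y) := by
          gcongr
          · exact mul_nonneg (Real.rpow_nonneg dist_nonneg σ) (hρ y)
          · linarith
          · exact mem_closedBall'.mp hys
  · rw [integrableOn_singleton_iff]
    exact Or.inr measure_singleton_lt_top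

theorem stmt4_general (n : ℕ) (ρ : EuclideanSpace ℝ (Fin n) → ℝ)
    (hmeas : Measurable ρ) (hρ : ∀ y, 0 ≤ ρ y)
    (x : EuclideanSpace ℝ (Fin n)) (κ σ s : ℝ)
    (hσ : σ ∈ Set.Ioo (-κ) (0 : ℝ)) (hs : 0 < s)
    (hdecay : ∀ r : ℝ, 0 < r → r ≤ s → ∫ y in closedBall x r, ρ y ≤ r ^ κ) :
    ∫ y in closedBall x s, dist x y ^ σ * ρ y ≤ (1 + |σ| / (κ + σ)) * s ^ (κ + σ) := by
  have hσ0 : σ < 0 := hσ.2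
  have hκσ : 0 < κ + σ := by linarith [hσ.1]
  have hbound : 0 ≤ (1 + |σ| / (κ + σ)) * s ^ (κ + σ) :=
    mul_nonneg (add_nonneg zero_le_one (div_nonneg (abs_nonneg σ) hκσ.le)) (by positivity)
  -- Without integrability of `ρ` the hypothesis `hdecay` says nothing, but then the integrand is
  -- not integrable either and the left side is the junk value 0.
  by_cases hρint : IntegrableOn ρ (closedBall x s)
  swap
  · rw [integral_undef
      (mt (IntegrableOn.of_dist_rpow_mul hmeas.aestronglyMeasurable hρ hσ0.le) hρint)]
    exact hbound
  set ν := volume.withDensity fun y => ENNReal.ofReal (ρ y)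
  have hν : ∀ r, 0 < r → r ≤ s → ν (closedBall x r) ≤ ENNReal.ofReal (r ^ κ) := fun r hr hrs => by
    rw [withDensity_apply _ measurableSet_closedBall, ← ofReal_integral_eq_lintegral_ofReal
      (hρint.mono_set (closedBall_subset_closedBall hrs)) (ae_of_all _ hρ)]
    exact ENNReal.ofReal_le_ofReal (hdecay r hr hrs)
  have hlintegral : ∫ y in closedBall x s, dist x y ^ σ * ρ y =
      (∫⁻ y in closedBall x s, ENNReal.ofReal (dist x y ^ σ) ∂ν).toReal := by
    rw [integral_eq_lintegral_of_nonneg_ae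
        (ae_of_all _ fun y => mul_nonneg (Real.rpow_nonneg dist_nonneg σ) (hρ y)) (by fun_prop),
      setLIntegral_withDensity_eq_setLIntegral_mul _ hmeas.ennreal_ofReal
        (by fun_prop) measurableSet_closedBall]
    congr 1
    exact lintegral_congr fun y => by
      rw [Pi.mul_apply, ENNReal.ofReal_mul (Real.rpow_nonneg dist_nonneg σ), mul_comm]
  rw [hlintegral]
  exact ENNReal.toReal_le_of_le_ofReal hbound (setLIntegral_closedBall_dist_rpow_le hσ0 hκσ hs hν)

/-- In `ℝⁿ`, if the density maximal function satisfies `Mρ(r,x) ≤ r^κ` for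
all `r ∈ (0,s]`, with `κ > 0` and `σ ∈ (-κ,0)`, then
`∫_{B_s(x)} |x-y|^σ ρ(y) dy ≤ (1 + |σ|/(κ+σ)) s^{κ+σ}`. -/
theorem stmt4 (n : ℕ) (hn : 1 ≤ n) (ρ : EuclideanSpace ℝ (Fin n) → ℝ)
    (hmeas : Measurable ρ) (hρ : ∀ y, 0 ≤ ρ y)
    (x : EuclideanSpace ℝ (Fin n)) (κ σ s : ℝ)
    (hκ : 0 < κ) (hσ : σ ∈ Set.Ioo (-κ) (0 : ℝ)) (hs : 0 < s)
    (hdecay : ∀ r : ℝ, 0 < r → r ≤ s → ∫ y in closedBall x r, ρ y ≤ r ^ κ) :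
    ∫ y in closedBall x s, dist x y ^ σ * ρ y ≤ (1 + |σ| / (κ + σ)) * s ^ (κ + σ) :=
  stmt4_general n ρ hmeas hρ x κ σ s hσ hs hdecay
end

section
/- Let n ≥ 1 be an integer, ρ : ℝⁿ → [0,∞) integrable, r ∈ (0,1) and a > 0. Define E_r = { x ∈ ℝⁿ : Mρ(s,x) ≤ s^a for all s ∈ (0,r] }. Then E_r is closed, and its complement E_r^c = { x ∈ ℝⁿ : Mρ(s,x) > s^a for some s ∈ (0,r] } can be covered by countably many balls B(x_j, τ_j) with radii τ_j ≤ 5r satisfying Σ_j τ_j^a ≤ 5^a ∫_{ℝⁿ} ρ dx; in particular the a-order spherical Hausdorff premeasure of E_r^c at level 5r is at most 5^a ‖ρ‖_{L¹(ℝⁿ)}. -/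
open MeasureTheory Metric Set Filter Topology TopologicalSpace Function

/-!
The function `x ↦ ∫_{B(x,s)} ρ` is lower semicontinuous for the open ball (Fatou), and spheres are
Lebesgue-null, so `E_r` is an intersection of sublevel sets of lower semicontinuous functions.
For the covering, every `x ∉ E_r` carries a radius `t x ≤ r` with `t x ^ a < ∫_{B(x, t x)} ρ`;
the Vitali covering lemma extracts a disjoint, hence countable, subfamily whose five-fold
enlargements cover `E_rᶜ`, and disjointness bounds `Σ (5 t)^a` by `5^a ∫ ρ`.
-/

theorem lowerSemicontinuous_lintegral {α Y : Type*} [MeasurableSpace α] {μ : Measure α}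
    [TopologicalSpace Y] [FirstCountableTopology Y] {F : Y → α → ENNReal}
    (hF : ∀ a, LowerSemicontinuous (F · a)) (hmeas : ∀ x, AEMeasurable (F x) μ) :
    LowerSemicontinuous fun x => ∫⁻ a, F x a ∂μ := fun x =>
  lowerSemicontinuousAt_iff_le_liminf.2 <|
    calc ∫⁻ a, F x a ∂μ ≤ ∫⁻ a, liminf (F · a) (𝓝 x) ∂μ :=
          lintegral_mono fun a => lowerSemicontinuousAt_iff_le_liminf.1 (hF a x)
      _ ≤ liminf (fun y => ∫⁻ a, F y a ∂μ) (𝓝 x) := lintegral_liminf_le' hmeas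

theorem Function.Injective.exists_nat_indexed_ball_cover {X ι : Type*} [PseudoMetricSpace X]
    [Nonempty X] {e : ι → ℕ} (he : Injective e) {S : Set X} (c : ι → X) (τ : ι → ℝ)
    {a R B : ℝ} (ha : a ≠ 0) (hR : 0 ≤ R) (hτ : ∀ i, 0 ≤ τ i ∧ τ i ≤ R)
    (hS : S ⊆ ⋃ i, ball (c i) (τ i)) (hsum : Summable fun i => τ i ^ a)
    (hB : ∑' i, τ i ^ a ≤ B) :
    ∃ (c' : ℕ → X) (τ' : ℕ → ℝ), (∀ j, 0 ≤ τ' j ∧ τ' j ≤ R) ∧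
      S ⊆ ⋃ j, ball (c' j) (τ' j) ∧ Summable (fun j => τ' j ^ a) ∧ ∑' j, τ' j ^ a ≤ B := by
  have hpow : (fun j => extend e τ 0 j ^ a) = extend e (τ · ^ a) 0 := by
    ext j
    rw [apply_extend (· ^ a)]
    simp [comp_def, Real.zero_rpow ha, Pi.zero_def]
  refine ⟨extend e c fun _ => Classical.arbitrary X, extend e τ 0, fun j => ?_,
    hS.trans <| iUnion_subset fun i => subset_iUnion_of_subset (e i) ?_, ?_, ?_⟩
  · by_cases hj : ∃ i, e i = j
    · obtain ⟨i, rfl⟩ := hj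
      simpa [he.extend_apply] using hτ i
    · simpa [extend_apply' _ _ _ hj] using hR
  · rw [he.extend_apply, he.extend_apply]
  · rwa [hpow, summable_extend_zero he]
  · rwa [hpow, tsum_extend_zero he]

theorem summable_and_tsum_le_integral {X ι : Type*} [MeasurableSpace X] [Countable ι]
    {μ : Measure X} {f : X → ℝ} {A : ι → Set X} (hA : ∀ i, MeasurableSet (A i))
    (hd : Pairwise (Disjoint on A)) (hf : Integrable f μ) (hf0 : 0 ≤ᵐ[μ] f)
    {g : ι → ℝ} (hg0 : ∀ i, 0 ≤ g i) (hg : ∀ i, g i ≤ ∫ y in A i, f y ∂μ) :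
    Summable g ∧ ∑' i, g i ≤ ∫ y, f y ∂μ := by
  have H := hasSum_integral_iUnion hA hd hf.integrableOn
  have hsum : Summable g := H.summable.of_nonneg_of_le hg0 hg
  refine ⟨hsum, ?_⟩
  calc ∑' i, g i ≤ ∑' i, ∫ y in A i, f y ∂μ := hsum.tsum_le_tsum hg H.summable
    _ = ∫ y in ⋃ i, A i, f y ∂μ := H.tsum_eq
    _ ≤ ∫ y, f y ∂μ := setIntegral_le_integral hf hf0

section BallIntegrals

variable {X : Type*} [PseudoMetricSpace X] [MeasurableSpace X] [OpensMeasurableSpace X]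
  {μ : Measure X} {f : X → ℝ}

theorem lowerSemicontinuous_setLIntegral_ball {g : X → ENNReal} (hg : AEMeasurable g μ) (s : ℝ) :
    LowerSemicontinuous fun x => ∫⁻ y in ball x s, g y ∂μ := by
  simp_rw [← lintegral_indicator measurableSet_ball]
  refine lowerSemicontinuous_lintegral (fun y => ?_) fun x => hg.indicator measurableSet_ball
  have : (fun x => (ball x s).indicator g y) = (ball y s).indicator fun _ => g y := by
    ext x
    simp only [indicator, mem_ball, dist_comm]
  exact this ▸ isOpen_ball.lowerSemicontinuous_indicator (by simp)

theorem isClosed_setOf_setIntegral_ball_le (hf : Integrable f μ) (hf0 : 0 ≤ᵐ[μ] f) (s : ℝ)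
    {C : ℝ} (hC : 0 ≤ C) : IsClosed {x | ∫ y in ball x s, f y ∂μ ≤ C} := by
  have hset : {x | ∫ y in ball x s, f y ∂μ ≤ C} =
      (fun x => ∫⁻ y in ball x s, ENNReal.ofReal (f y) ∂μ) ⁻¹' Iic (ENNReal.ofReal C) := by
    ext x
    rw [mem_preimage, mem_Iic, ← ofReal_integral_eq_lintegral_ofReal hf.integrableOn
      (ae_restrict_of_ae hf0), ENNReal.ofReal_le_ofReal_iff hC, mem_ofPred_eq]
  rw [hset]
  exact (lowerSemicontinuous_setLIntegral_ball hf.aemeasurable.ennreal_ofReal s).isClosed_preimage _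

theorem exists_ball_cover_tsum_rpow_le_integral [SeparableSpace X] [Nonempty X]
    (hf : Integrable f μ) (hf0 : 0 ≤ᵐ[μ] f) {S : Set X} {a R : ℝ} (ha : 0 < a) (hR : 0 ≤ R)
    (hS : ∀ x ∈ S, ∃ t ∈ Ioc 0 R, t ^ a < ∫ y in ball x t, f y ∂μ) :
    ∃ (c : ℕ → X) (τ : ℕ → ℝ), (∀ j, 0 ≤ τ j ∧ τ j ≤ 5 * R) ∧ S ⊆ ⋃ j, ball (c j) (τ j) ∧
      Summable (fun j => τ j ^ a) ∧ ∑' j, τ j ^ a ≤ 5 ^ a * ∫ y, f y ∂μ := by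
  choose! t ht hlt using hS
  obtain ⟨u, huS, hdisj, hcov⟩ := Vitali.exists_disjoint_subfamily_covering_enlargement_ball S id
    t R (fun x hx => (ht x hx).2) 5 (by norm_num)
  have hu : u.Countable := hdisj.countable_of_isOpen (fun _ _ => isOpen_ball)
    fun x hx => nonempty_ball.2 (ht x (huS hx)).1
  have := hu.to_subtype
  have ht' (b : u) : 0 < t b := (ht b (huS b.2)).1
  obtain ⟨hsum, hle⟩ := summable_and_tsum_le_integral (A := fun b : u => ball (b : X) (t b))
    (fun _ => measurableSet_ball) (hdisj.subtype _ _) hf hf0 (g := fun b => t b ^ a)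
    (fun b => Real.rpow_nonneg (ht' b).le a) fun b => (hlt b (huS b.2)).le
  have hpow (b : u) : (5 * t b) ^ a = 5 ^ a * t b ^ a := Real.mul_rpow (by norm_num) (ht' b).le
  obtain ⟨e, he⟩ := Countable.exists_injective_nat u
  refine he.exists_nat_indexed_ball_cover (fun b => (b : X)) (fun b => 5 * t b) ha.ne'
    (by positivity) (fun b => ⟨by linarith [ht' b], by linarith [(ht b (huS b.2)).2]⟩)
    (fun x hx => ?_) (by simpa only [hpow] using hsum.mul_left (5 ^ a)) ?_
  · obtain ⟨b, hb, hsub⟩ := hcov x hx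
    exact mem_iUnion.2 ⟨⟨b, hb⟩, hsub (mem_ball_self (ht x hx).1)⟩
  · simp only [hpow, tsum_mul_left]
    gcongr

end BallIntegrals

theorem setIntegral_closedBall_eq_ball {E : Type*} [NormedAddCommGroup E] [NormedSpace ℝ E]
    [FiniteDimensional ℝ E] [MeasurableSpace E] [BorelSpace E] (μ : Measure E)
    [μ.IsAddHaarMeasure] (f : E → ℝ) (x : E) {s : ℝ} (hs : s ≠ 0) :
    ∫ y in closedBall x s, f y ∂μ = ∫ y in ball x s, f y ∂μ := by
  rw [← ball_union_sphere]
  exact setIntegral_congr_set (union_ae_eq_left_of_ae_eq_empty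
    (ae_eq_empty.2 (Measure.addHaar_sphere_of_ne_zero μ x hs)))

theorem stmt8_general (n : ℕ) (ρ : EuclideanSpace ℝ (Fin n) → ℝ)
    (hρ : ∀ y, 0 ≤ ρ y) (hint : Integrable ρ)
    (r a : ℝ) (hr : r ∈ Set.Ioo (0 : ℝ) 1) (ha : 0 < a) :
    IsClosed {x : EuclideanSpace ℝ (Fin n) |
        ∀ s : ℝ, 0 < s → s ≤ r → ∫ y in closedBall x s, ρ y ≤ s ^ a} ∧
      ∃ (c : ℕ → EuclideanSpace ℝ (Fin n)) (τ : ℕ → ℝ),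
        (∀ j, 0 ≤ τ j ∧ τ j ≤ 5 * r) ∧
        {x : EuclideanSpace ℝ (Fin n) |
            ∀ s : ℝ, 0 < s → s ≤ r → ∫ y in closedBall x s, ρ y ≤ s ^ a}ᶜ ⊆
          (⋃ j, Metric.ball (c j) (τ j)) ∧
        Summable (fun j => τ j ^ a) ∧
        ∑' j, τ j ^ a ≤ 5 ^ a * ∫ y, ρ y := by
  have hE : {x : EuclideanSpace ℝ (Fin n) |
      ∀ s : ℝ, 0 < s → s ≤ r → ∫ y in closedBall x s, ρ y ≤ s ^ a} =
      {x | ∀ s : ℝ, 0 < s → s ≤ r → ∫ y in ball x s, ρ y ≤ s ^ a} := by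
    ext x
    exact forall₂_congr fun s hs => by rw [setIntegral_closedBall_eq_ball volume ρ x hs.ne']
  rw [hE]
  refine ⟨?_, exists_ball_cover_tsum_rpow_le_integral hint (ae_of_all _ hρ) ha hr.1.le ?_⟩
  · simp only [ofPred_forall]
    exact isClosed_iInter fun s => isClosed_iInter fun hs => isClosed_iInter fun _ =>
      isClosed_setOf_setIntegral_ball_le hint (ae_of_all _ hρ) s (Real.rpow_nonneg hs.le a)
  · intro x hx
    simp only [mem_compl_iff, mem_ofPred_eq, not_forall, not_le] at hx
    obtain ⟨t, ht0, htr, hlt⟩ := hx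
    exact ⟨t, ⟨ht0, htr⟩, hlt⟩

/-- For integrable `ρ ≥ 0` on `ℝⁿ`, `r ∈ (0,1)` and `a > 0`, the set
`E_r = {x : Mρ(s,x) ≤ s^a for all s ∈ (0,r]}` is closed, and its complement can be covered
by countably many balls of radii `τ_j ≤ 5r` with `Σ_j τ_j^a ≤ 5^a ∫ ρ`. -/
theorem stmt8 (n : ℕ) (hn : 1 ≤ n) (ρ : EuclideanSpace ℝ (Fin n) → ℝ)
    (hmeas : Measurable ρ) (hρ : ∀ y, 0 ≤ ρ y) (hint : Integrable ρ)
    (r a : ℝ) (hr : r ∈ Set.Ioo (0 : ℝ) 1) (ha : 0 < a) :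
    IsClosed {x : EuclideanSpace ℝ (Fin n) |
        ∀ s : ℝ, 0 < s → s ≤ r → ∫ y in closedBall x s, ρ y ≤ s ^ a} ∧
      ∃ (c : ℕ → EuclideanSpace ℝ (Fin n)) (τ : ℕ → ℝ),
        (∀ j, 0 ≤ τ j ∧ τ j ≤ 5 * r) ∧
        {x : EuclideanSpace ℝ (Fin n) |
            ∀ s : ℝ, 0 < s → s ≤ r → ∫ y in closedBall x s, ρ y ≤ s ^ a}ᶜ ⊆
          (⋃ j, Metric.ball (c j) (τ j)) ∧
        Summable (fun j => τ j ^ a) ∧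
        ∑' j, τ j ^ a ≤ 5 ^ a * ∫ y, ρ y :=
  stmt8_general n ρ hρ hint r a hr ha
end

section
/- Let n ∈ {2,3}, γ ∈ [1, n/2], γ(n) = (n(n-1) - nγ)/(n-γ), and α > 0 with γ(n) - n + 1 + α < 0. Let ρ : ℝⁿ → [0,∞) be measurable and x ∈ ℝⁿ be such that Mρ(s,x) ≤ s^{γ(n)+α} for every s > 0 and such that 0 < M₀ρ(x) < ∞, where M₀ρ(x) = sup_{r>0} r^{-n} ∫_{B_r(x)} ρ(y) dy. Then ∫_{ℝⁿ} |x-y|^{1-n} ρ(y) dy ≤ C(n,γ,α) (M₀ρ(x))^{(γ(n)-n+1+α)/(γ(n)-n+α)} for a constant C(n,γ,α) independent of ρ and x. -/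
open MeasureTheory Metric Set Filter Topology ENNReal

/-- The exponent `γ(n) = (n(n-1) - nγ)/(n-γ)` from the paper. -/
noncomputable def gammaSmall (n : ℕ) (γ : ℝ) : ℝ :=
  ((n : ℝ) * ((n : ℝ) - 1) - (n : ℝ) * γ) / ((n : ℝ) - γ)

/-!
Write `M = M₀ρ(x)`, `β = γ(n) + α`, and let `s = M^{1/(β-n)}` be the radius at which the two
bounds `Mρ(r,x) ≤ M rⁿ` and `Mρ(r,x) ≤ r^β` coincide. Cut `ℝⁿ \ {x}` into the dyadic shells
`2ᵏs < |x-y| ≤ 2ᵏ⁺¹s`, `k ∈ ℤ`. On the shell `k` the kernel is at most `(2ᵏs)^{1-n}` and the mass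
at most `Mρ(2ᵏ⁺¹s, x)`. For `k < 0` the bound `M rⁿ` gives a geometric series of ratio `1/2`, for
`k ≥ 0` the bound `r^β` one of ratio `2^{β+1-n} < 1`; both sums are constant multiples of
`s^{β+1-n} = M^{(β+1-n)/(β-n)}`.
-/

lemma compl_singleton_subset_iUnion_shell {X : Type*} [MetricSpace X] (x : X) {s : ℝ}
    (hs : 0 < s) :
    ({x}ᶜ : Set X) ⊆ ⋃ k : ℤ, closedBall x (2 * (2 ^ k * s)) \ closedBall x (2 ^ k * s) := by
  intro y hy
  obtain ⟨k, hk_lt, hk_le⟩ := exists_mem_Ioc_zpow (div_pos (dist_pos.2 hy) hs) one_lt_two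
  rw [lt_div_iff₀ hs] at hk_lt
  rw [div_le_iff₀ hs, zpow_add_one₀ two_ne_zero] at hk_le
  refine mem_iUnion.2 ⟨k, ?_, ?_⟩
  · rw [mem_closedBall]; linarith
  · rw [mem_closedBall, not_le]; exact hk_lt

lemma tsum_ofReal_rpow_mul_le {F : ℝ → ℝ≥0∞} {A c u q p : ℝ} (hA : 0 ≤ A) (hc : 0 < c)
    (hu : 0 < u) (hcp : c ^ (q + p) < 1)
    (hF : ∀ r, 0 < r → F r ≤ ENNReal.ofReal (A * r ^ p)) :
    ∑' j : ℕ, ENNReal.ofReal ((c ^ j * u) ^ q) * F (2 * (c ^ j * u)) ≤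
      ENNReal.ofReal (A * 2 ^ p * u ^ (q + p) / (1 - c ^ (q + p))) := by
  set K := A * 2 ^ p * u ^ (q + p)
  have hr : 0 ≤ c ^ (q + p) := by positivity
  have hterm (j : ℕ) : (c ^ j * u) ^ q * (A * (2 * (c ^ j * u)) ^ p) = K * (c ^ (q + p)) ^ j := by
    simp only [K]
    rw [Real.mul_rpow two_pos.le (by positivity), Real.mul_rpow (by positivity) hu.le,
      Real.mul_rpow (by positivity) hu.le, ← Real.rpow_pow_comm hc.le, ← Real.rpow_pow_comm hc.le,
      Real.rpow_add hu, Real.rpow_add hc, mul_pow]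
    ring
  calc ∑' j : ℕ, ENNReal.ofReal ((c ^ j * u) ^ q) * F (2 * (c ^ j * u))
      ≤ ∑' j : ℕ, ENNReal.ofReal (K * (c ^ (q + p)) ^ j) := by
        refine ENNReal.tsum_le_tsum fun j => ?_
        rw [← hterm, ENNReal.ofReal_mul (by positivity)]
        gcongr
        exact hF _ (by positivity)
    _ = ENNReal.ofReal (∑' j : ℕ, K * (c ^ (q + p)) ^ j) :=
        (ENNReal.ofReal_tsum_of_nonneg (fun j => by positivity)
          ((summable_geometric_of_lt_one hr hcp).mul_left K)).symm
    _ = ENNReal.ofReal (K / (1 - c ^ (q + p))) := by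
        rw [tsum_mul_left, tsum_geometric_of_lt_one hr hcp, div_eq_mul_inv]

noncomputable def dyadicConst (q a b : ℝ) : ℝ :=
  2 ^ b / (1 - 2 ^ (q + b)) + 2 ^ (-q) / (1 - 2 ^ (-(q + a)))

lemma dyadicConst_pos {q a b : ℝ} (hqa : 0 < q + a) (hqb : q + b < 0) :
    0 < dyadicConst q a b := by
  have hfar := sub_pos.2 (Real.rpow_lt_one_of_one_lt_of_neg one_lt_two hqb)
  have hnear := sub_pos.2 (Real.rpow_lt_one_of_one_lt_of_neg one_lt_two (neg_neg_of_pos hqa))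
  unfold dyadicConst
  positivity

lemma le_toReal_iSup_rpow_neg_mul {g : ℝ → ℝ} {d r : ℝ}
    (htop : (⨆ (t : ℝ) (_ : 0 < t), ENNReal.ofReal (t ^ (-d) * g t)) ≠ ⊤) (hr : 0 < r) :
    g r ≤ (⨆ (t : ℝ) (_ : 0 < t), ENNReal.ofReal (t ^ (-d) * g t)).toReal * r ^ d := by
  have h := (ENNReal.ofReal_le_iff_le_toReal htop).1
    (le_iSup₂ (f := fun (t : ℝ) (_ : 0 < t) => ENNReal.ofReal (t ^ (-d) * g t)) r hr)
  rwa [Real.rpow_neg hr.le, inv_mul_le_iff₀ (by positivity), mul_comm] at h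

section RieszPotential

variable {X : Type*} [MetricSpace X] [MeasurableSpace X] [OpensMeasurableSpace X]
  {μ : Measure X} {ρ : X → ℝ} {x : X}

lemma setLIntegral_shell_le (x : X) {q a b : ℝ} (hq : q ≤ 0) (ha : 0 < a) :
    ∫⁻ y in closedBall x b \ closedBall x a, ENNReal.ofReal (dist x y ^ q * ρ y) ∂μ ≤
      ENNReal.ofReal (a ^ q) * ∫⁻ y in closedBall x b, ENNReal.ofReal (ρ y) ∂μ := by
  calc ∫⁻ y in closedBall x b \ closedBall x a, ENNReal.ofReal (dist x y ^ q * ρ y) ∂μ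
      ≤ ∫⁻ y in closedBall x b \ closedBall x a,
          ENNReal.ofReal (a ^ q) * ENNReal.ofReal (ρ y) ∂μ := by
        refine setLIntegral_mono' (measurableSet_closedBall.diff measurableSet_closedBall)
          fun y hy => ?_
        have hay : a < dist x y := by
          simpa [dist_comm] using hy.2
        rw [ENNReal.ofReal_mul (Real.rpow_nonneg dist_nonneg _)]
        gcongr ENNReal.ofReal ?_ * _
        exact Real.rpow_le_rpow_of_nonpos ha hay.le hq
    _ ≤ ∫⁻ y in closedBall x b, ENNReal.ofReal (a ^ q) * ENNReal.ofReal (ρ y) ∂μ :=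
        lintegral_mono_set sdiff_subset
    _ = ENNReal.ofReal (a ^ q) * ∫⁻ y in closedBall x b, ENNReal.ofReal (ρ y) ∂μ :=
        lintegral_const_mul' _ _ ENNReal.ofReal_ne_top

lemma lintegral_rpow_dist_mul_le_tsum_shell [NullSingletonClass μ] (ρ : X → ℝ) (x : X)
    {q s : ℝ} (hq : q ≤ 0) (hs : 0 < s) :
    ∫⁻ y, ENNReal.ofReal (dist x y ^ q * ρ y) ∂μ ≤
      ∑' k : ℤ, ENNReal.ofReal ((2 ^ k * s) ^ q) *
        ∫⁻ y in closedBall x (2 * (2 ^ k * s)), ENNReal.ofReal (ρ y) ∂μ := by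
  calc ∫⁻ y, ENNReal.ofReal (dist x y ^ q * ρ y) ∂μ
      = ∫⁻ y in {x}ᶜ, ENNReal.ofReal (dist x y ^ q * ρ y) ∂μ := by
        rw [restrict_compl_singleton]
    _ ≤ ∫⁻ y in ⋃ k : ℤ, closedBall x (2 * (2 ^ k * s)) \ closedBall x (2 ^ k * s),
          ENNReal.ofReal (dist x y ^ q * ρ y) ∂μ :=
        lintegral_mono_set (compl_singleton_subset_iUnion_shell x hs)
    _ ≤ ∑' k : ℤ, ∫⁻ y in closedBall x (2 * (2 ^ k * s)) \ closedBall x (2 ^ k * s),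
          ENNReal.ofReal (dist x y ^ q * ρ y) ∂μ :=
        lintegral_iUnion_le _ _
    _ ≤ _ := ENNReal.tsum_le_tsum fun k => setLIntegral_shell_le x hq (by positivity)

theorem lintegral_rpow_dist_mul_le [NullSingletonClass μ] {q a b A : ℝ} (hq : q ≤ 0)
    (hqa : 0 < q + a) (hqb : q + b < 0) (hA : 0 < A)
    (hsmall : ∀ r, 0 < r → ∫⁻ y in closedBall x r, ENNReal.ofReal (ρ y) ∂μ ≤
      ENNReal.ofReal (A * r ^ a))
    (hlarge : ∀ r, 0 < r → ∫⁻ y in closedBall x r, ENNReal.ofReal (ρ y) ∂μ ≤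
      ENNReal.ofReal (r ^ b)) :
    ∫⁻ y, ENNReal.ofReal (dist x y ^ q * ρ y) ∂μ ≤
      ENNReal.ofReal (dyadicConst q a b * A ^ ((q + b) / (b - a))) := by
  set F : ℝ → ℝ≥0∞ := fun r => ∫⁻ y in closedBall x r, ENNReal.ofReal (ρ y) ∂μ
  -- the radius at which the bounds `A * s ^ a` and `s ^ b` agree
  set s := A ^ (b - a)⁻¹
  have hs : 0 < s := by positivity
  have hAe : A ^ ((q + b) / (b - a)) = s ^ (q + b) := by
    rw [← Real.rpow_mul hA.le, div_eq_inv_mul]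
  have hsA : A = s ^ (b - a) := by
    rw [← Real.rpow_mul hA.le, inv_mul_cancel₀ (by linarith), Real.rpow_one]
  have hhalf : (2⁻¹ : ℝ) ^ (q + a) = 2 ^ (-(q + a)) := by
    rw [Real.inv_rpow two_pos.le, Real.rpow_neg two_pos.le]
  have hfar_lt : (2 : ℝ) ^ (q + b) < 1 := Real.rpow_lt_one_of_one_lt_of_neg one_lt_two hqb
  have hnear_lt : (2⁻¹ : ℝ) ^ (q + a) < 1 :=
    hhalf ▸ Real.rpow_lt_one_of_one_lt_of_neg one_lt_two (neg_neg_of_pos hqa)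
  have hidx (j : ℕ) : (2 : ℝ) ^ (-((j : ℤ) + 1)) * s = (2⁻¹) ^ j * (2⁻¹ * s) := by
    rw [show -((j : ℤ) + 1) = -((j + 1 : ℕ) : ℤ) by push_cast; ring, zpow_neg, zpow_natCast,
      ← inv_pow, pow_succ, mul_assoc]
  have hfar := tsum_ofReal_rpow_mul_le (F := F) zero_le_one two_pos hs hfar_lt
    (by simpa only [one_mul] using hlarge)
  have hnear := tsum_ofReal_rpow_mul_le (F := F) (u := 2⁻¹ * s) hA.le (by norm_num)
    (by positivity) hnear_lt hsmall
  have hnear_eq : A * 2 ^ a * (2⁻¹ * s) ^ (q + a) / (1 - (2⁻¹ : ℝ) ^ (q + a)) =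
      2 ^ (-q) / (1 - 2 ^ (-(q + a))) * s ^ (q + b) := by
    rw [Real.mul_rpow (by norm_num) hs.le, hhalf, hsA]
    calc s ^ (b - a) * 2 ^ a * (2 ^ (-(q + a)) * s ^ (q + a)) / (1 - 2 ^ (-(q + a)))
        = (2 ^ a * 2 ^ (-(q + a))) * (s ^ (b - a) * s ^ (q + a)) / (1 - 2 ^ (-(q + a))) := by
          ring
      _ = 2 ^ (-q) / (1 - 2 ^ (-(q + a))) * s ^ (q + b) := by
          rw [← Real.rpow_add two_pos, ← Real.rpow_add hs]
          ring_nf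
  have hfar_pos := sub_pos.2 hfar_lt
  have hnear_pos := sub_pos.2 hnear_lt
  calc ∫⁻ y, ENNReal.ofReal (dist x y ^ q * ρ y) ∂μ
      ≤ ∑' k : ℤ, ENNReal.ofReal ((2 ^ k * s) ^ q) * F (2 * (2 ^ k * s)) :=
        lintegral_rpow_dist_mul_le_tsum_shell ρ x hq hs
    _ = ∑' j : ℕ, ENNReal.ofReal ((2 ^ (j : ℤ) * s) ^ q) * F (2 * (2 ^ (j : ℤ) * s)) +
          ∑' j : ℕ, ENNReal.ofReal ((2 ^ (-((j : ℤ) + 1)) * s) ^ q) *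
            F (2 * (2 ^ (-((j : ℤ) + 1)) * s)) :=
        tsum_of_nat_of_neg_add_one ENNReal.summable ENNReal.summable
    _ ≤ ENNReal.ofReal (1 * 2 ^ b * s ^ (q + b) / (1 - 2 ^ (q + b))) +
          ENNReal.ofReal (A * 2 ^ a * (2⁻¹ * s) ^ (q + a) / (1 - (2⁻¹ : ℝ) ^ (q + a))) := by
        gcongr
        · simpa only [zpow_natCast] using hfar
        · simpa only [hidx] using hnear
    _ = ENNReal.ofReal (dyadicConst q a b * A ^ ((q + b) / (b - a))) := by
        rw [← ENNReal.ofReal_add (by positivity) (by positivity), hnear_eq, hAe, dyadicConst]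
        ring_nf

lemma integrableOn_closedBall_of_integrable_rpow_dist_mul [NullSingletonClass μ] {q : ℝ}
    (hq : q ≤ 0) (hρ : AEStronglyMeasurable ρ μ)
    (hf : Integrable (fun y => dist x y ^ q * ρ y) μ) (r : ℝ) :
    IntegrableOn ρ (closedBall x r) μ := by
  refine Integrable.mono' (hf.norm.integrableOn.const_mul (r ^ (-q))) hρ.restrict ?_
  filter_upwards [ae_restrict_of_ae (μ.ae_ne x), ae_restrict_mem measurableSet_closedBall]
    with y hyx hyr
  have hd : 0 < dist x y := dist_pos.2 hyx.symm
  have hdr : dist x y ≤ r := by simpa [dist_comm] using hyr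
  calc ‖ρ y‖ = dist x y ^ (-q) * ‖dist x y ^ q * ρ y‖ := by
        rw [norm_mul, Real.norm_of_nonneg (Real.rpow_nonneg hd.le _), ← mul_assoc,
          ← Real.rpow_add hd, neg_add_cancel, Real.rpow_zero, one_mul]
    _ ≤ r ^ (-q) * ‖dist x y ^ q * ρ y‖ := by
        gcongr
        linarith

end RieszPotential

theorem stmt9_general (n : ℕ) (hn : n = 2 ∨ n = 3) (γ α : ℝ)
    (hcond : gammaSmall n γ - n + 1 + α < 0) :
    ∃ C : ℝ, 0 < C ∧
      ∀ ρ : EuclideanSpace ℝ (Fin n) → ℝ, Measurable ρ → (∀ y, 0 ≤ ρ y) →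
        ∀ x : EuclideanSpace ℝ (Fin n),
          (∀ s : ℝ, 0 < s →
            ∫ y in closedBall x s, ρ y ≤ s ^ (gammaSmall n γ + α)) →
          let M₀ : ℝ≥0∞ := ⨆ (r : ℝ) (_ : 0 < r),
            ENNReal.ofReal (r ^ (-(n : ℝ)) * ∫ y in closedBall x r, ρ y)
          0 < M₀ → M₀ ≠ ⊤ →
          ∫ y, dist x y ^ (1 - (n : ℝ)) * ρ y ≤
            C * M₀.toReal ^
              ((gammaSmall n γ - n + 1 + α) / (gammaSmall n γ - n + α)) := by
  have hn0 : n ≠ 0 := by rcases hn with rfl | rfl <;> norm_num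
  have : NeZero n := ⟨hn0⟩
  set β := gammaSmall n γ + α
  have hq : 1 - (n : ℝ) ≤ 0 := by
    have : (1 : ℝ) ≤ n := by exact_mod_cast Nat.one_le_iff_ne_zero.2 hn0
    linarith
  have hqa : 0 < 1 - (n : ℝ) + n := by norm_num
  have hqb : 1 - (n : ℝ) + β < 0 := by linarith
  refine ⟨dyadicConst (1 - n) n β, dyadicConst_pos hqa hqb, ?_⟩
  intro ρ hρm hρ x hlarge M₀ hpos htop
  rw [show (gammaSmall n γ - n + 1 + α) / (gammaSmall n γ - n + α) = (1 - n + β) / (β - n) by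
    congr 1 <;> ring]
  have hRHS : 0 ≤ dyadicConst (1 - n) n β * M₀.toReal ^ ((1 - n + β) / (β - n)) :=
    mul_nonneg (dyadicConst_pos hqa hqb).le (Real.rpow_nonneg ENNReal.toReal_nonneg _)
  by_cases hf : Integrable (fun y => dist x y ^ (1 - (n : ℝ)) * ρ y)
  swap
  · rwa [integral_undef hf]
  have hmass (r : ℝ) : ∫⁻ y in closedBall x r, ENNReal.ofReal (ρ y) =
      ENNReal.ofReal (∫ y in closedBall x r, ρ y) :=
    (ofReal_integral_eq_lintegral_ofReal
      (integrableOn_closedBall_of_integrable_rpow_dist_mul hq hρm.aestronglyMeasurable hf r)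
      (ae_of_all _ hρ)).symm
  have hbound := lintegral_rpow_dist_mul_le hq hqa hqb (ENNReal.toReal_pos hpos.ne' htop)
    (fun r hr => hmass r ▸ ENNReal.ofReal_le_ofReal (le_toReal_iSup_rpow_neg_mul htop hr))
    (fun r hr => hmass r ▸ ENNReal.ofReal_le_ofReal (hlarge r hr))
  rw [integral_eq_lintegral_of_nonneg_ae
    (ae_of_all _ fun y => mul_nonneg (Real.rpow_nonneg dist_nonneg _) (hρ y))
    hf.aestronglyMeasurable]
  exact ENNReal.toReal_le_of_le_ofReal hRHS hbound

/-- For `n ∈ {2,3}`, `γ ∈ [1,n/2]` and `α > 0` with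
`γ(n) - n + 1 + α < 0`, there is `C = C(n,γ,α)` such that: if `ρ ≥ 0` is measurable,
`Mρ(s,x) ≤ s^{γ(n)+α}` for all `s > 0`, and the maximal function
`M₀ρ(x) = sup_{r>0} r^{-n} ∫_{B_r(x)} ρ` is positive and finite, then
`∫ |x-y|^{1-n} ρ(y) dy ≤ C (M₀ρ(x))^{(γ(n)-n+1+α)/(γ(n)-n+α)}`. -/
theorem stmt9 (n : ℕ) (hn : n = 2 ∨ n = 3) (γ α : ℝ)
    (hγ : γ ∈ Set.Icc (1 : ℝ) ((n : ℝ) / 2)) (hα : 0 < α)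
    (hcond : gammaSmall n γ - n + 1 + α < 0) :
    ∃ C : ℝ, 0 < C ∧
      ∀ ρ : EuclideanSpace ℝ (Fin n) → ℝ, Measurable ρ → (∀ y, 0 ≤ ρ y) →
        ∀ x : EuclideanSpace ℝ (Fin n),
          (∀ s : ℝ, 0 < s →
            ∫ y in closedBall x s, ρ y ≤ s ^ (gammaSmall n γ + α)) →
          let M₀ : ℝ≥0∞ := ⨆ (r : ℝ) (_ : 0 < r),
            ENNReal.ofReal (r ^ (-(n : ℝ)) * ∫ y in closedBall x r, ρ y)
          0 < M₀ → M₀ ≠ ⊤ →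
          ∫ y, dist x y ^ (1 - (n : ℝ)) * ρ y ≤
            C * M₀.toReal ^
              ((gammaSmall n γ - n + 1 + α) / (gammaSmall n γ - n + α)) :=
  stmt9_general n hn γ α hcond
end
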